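/- arXiv:2008.08174 — 2 statements merged into one kernel-verified Lean document; each statement's English description precedes it below -/
import Mathlib

section
/- Let E₂ be the set of operations on binary strings that increase the length by two, consisting of: inserting the adjacent pair 11 at some position, inserting the adjacent pair 00 at some position, and replacing an occurrence of 1 by 010. Then for any integers n ≥ 1, 0 ≤ a ≤ 2(n+1), 0 ≤ b ≤ 4, 0 ≤ c ≤ 2n, and any u, v ∈ C_{(a,b,c)}: if some binary word w ∈ {0,1}^{n+2} can be obtained from u by one operation from E₂ and also obtained from v by one operation from E₂, then u = v. -/
namespace BinCode

/-- Hamming weight of a binary string. -/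
def wt (u : List Bool) : ℕ := u.count true

/-- The VT syndrome `Σ_{i=1}^{|u|} i·u_i` (positions 1-indexed). -/
def vtSum (u : List Bool) : ℕ := (u.zipIdx.map fun p => if p.1 then p.2 + 1 else 0).sum

/-- `Σ_{i=1}^{|u|} i · (u_1 + ⋯ + u_i)`. -/
def wSum (u : List Bool) : ℕ :=
  ((List.range u.length).map fun i => (i + 1) * wt (u.take (i + 1))).sum

/-- The (variable-length) Varshamov–Tenengolts code `C_VT(α, m)`. -/
def CVT (α m : ℕ) : Set (List Bool) := {z | z.length ≤ m - 1 ∧ vtSum z % m = α}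

/-- The binary code `C_{(a,b,c)} ⊆ {0,1}^n`. -/
def Cabc (n a b c : ℕ) : Set (List Bool) :=
  {u | u.length = n ∧ vtSum u % (2 * n + 3) = a ∧ wt u % 5 = b ∧
    wSum u % (2 * n + 1) = c}

/-- `w` is obtained from `u` by deleting one bit. -/
def delBit (u w : List Bool) : Prop := ∃ i, i < u.length ∧ w = u.eraseIdx i

/-- `w` is obtained from `u` by inserting the bit `b` at some position. -/
def insBitAt (u w : List Bool) (b : Bool) : Prop :=
  ∃ i, i ≤ u.length ∧ w = u.take i ++ b :: u.drop i

/-- `w` is obtained from `u` by inserting one bit. -/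
def insBit (u w : List Bool) : Prop := ∃ b, insBitAt u w b

/-- Flip the bit at 0-based index `i`. -/
def flipAt (u : List Bool) (i : ℕ) : List Bool := u.set i (!(u.getD i false))

/-- `w` is obtained from `u` by flipping one bit. -/
def flip1 (u w : List Bool) : Prop := ∃ i, i < u.length ∧ w = flipAt u i

/-- `w` is obtained from `u` by flipping two adjacent bits. -/
def flip2 (u w : List Bool) : Prop :=
  ∃ i, i + 1 < u.length ∧ w = flipAt (flipAt u i) (i + 1)

/-- `w` is obtained from `u` by replacing one bit by two adjacent bits via
`0 → 11` or `1 → 00`. -/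
def expand1 (u w : List Bool) : Prop :=
  ∃ i, i < u.length ∧
    ((u.getD i false = false ∧ w = u.take i ++ true :: true :: u.drop (i + 1)) ∨
     (u.getD i false = true ∧ w = u.take i ++ false :: false :: u.drop (i + 1)))

/-- `w` is obtained from `u` by inserting the adjacent pair `b b`. -/
def insPair (u w : List Bool) (b : Bool) : Prop :=
  ∃ i, i ≤ u.length ∧ w = u.take i ++ b :: b :: u.drop i

/-- `w` is obtained from `u` by replacing an occurrence of `1` by `010`. -/
def oneTo010 (u w : List Bool) : Prop :=
  ∃ i, i < u.length ∧ u.getD i false = true ∧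
    w = u.take i ++ false :: true :: false :: u.drop (i + 1)


/-- The set `E₂` of operations increasing the length by two: inserting an
adjacent pair `11`, inserting an adjacent pair `00`, and `1 → 010`. -/
def E2 (u w : List Bool) : Prop :=
  insPair u w true ∨ insPair u w false ∨ oneTo010 u w

/-! Inserting `11` raises the weight by 2 while the other two operations keep it, so the weight
modulo 5 tells the `11` case apart. Writing `w = x ++ p ++ y` with `p` the inserted pattern, the VT
syndrome grows by `2 (|x| + wt y) + 3` for `11`, by `2 wt y` for `00` and by `2 wt y + 1` for
`1 → 010`. For words of length `n` these shifts differ by less than `2n + 3`, so equal syndromes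
modulo `2n + 3` force equal shifts, and parity separates `00` from `1 → 010`. Equal shifts at two
positions of `w` force the stretch of `w` between them to be a run of the inserted symbol (for
`010`, a nonempty run of `0`s would have to contain the `1` of the earlier pattern, so it is
empty); deleting either occurrence therefore gives the same word. -/

theorem wt_cons (b : Bool) (l : List Bool) : wt (b :: l) = wt l + b.toNat := by
  cases b <;> simp [wt]

theorem wt_append (x y : List Bool) : wt (x ++ y) = wt x + wt y := List.count_append ..

theorem wt_le_length (l : List Bool) : wt l ≤ l.length := List.count_le_length

theorem sum_zipIdx_shift (l : List Bool) (k : ℕ) :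
    (l.zipIdx k |>.map fun p => if p.1 then p.2 + 1 else 0).sum = vtSum l + k * wt l := by
  induction l generalizing k with
  | nil => simp [vtSum, wt]
  | cons c l ih =>
    rw [vtSum]
    simp only [List.zipIdx_cons, List.map_cons, List.sum_cons, ih, wt_cons]
    cases c <;> simp <;> ring

theorem vtSum_cons (b : Bool) (l : List Bool) : vtSum (b :: l) = vtSum l + wt l + b.toNat := by
  rw [vtSum, List.zipIdx_cons, List.map_cons, List.sum_cons, sum_zipIdx_shift]
  cases b <;> simp; ring

theorem vtSum_append (x y : List Bool) :
    vtSum (x ++ y) = vtSum x + vtSum y + x.length * wt y := by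
  induction x with
  | nil => simp [vtSum]
  | cons b x ih =>
    simp only [List.cons_append, vtSum_cons, ih, wt_append, List.length_cons]
    ring

section Syndromes

variable (x y : List Bool)

theorem wt_insert_pair (b : Bool) : wt (x ++ b :: b :: y) = wt (x ++ y) + 2 * b.toNat := by
  simp only [wt_append, wt_cons]; ring

theorem wt_replace_one : wt (x ++ false :: true :: false :: y) = wt (x ++ true :: y) := by
  simp [wt_append, wt_cons]

theorem vtSum_insert_true_pair :
    vtSum (x ++ true :: true :: y) = vtSum (x ++ y) + (2 * (x.length + wt y) + 3) := by
  simp only [vtSum_append, vtSum_cons, wt_cons, Bool.toNat_true]; ring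

theorem vtSum_insert_false_pair :
    vtSum (x ++ false :: false :: y) = vtSum (x ++ y) + 2 * wt y := by
  simp only [vtSum_append, vtSum_cons, wt_cons, Bool.toNat_false]; ring

theorem vtSum_replace_one :
    vtSum (x ++ false :: true :: false :: y) = vtSum (x ++ true :: y) + (2 * wt y + 1) := by
  simp only [vtSum_append, vtSum_cons, wt_cons, Bool.toNat_true, Bool.toNat_false]; ring

end Syndromes

theorem insPair.exists_append {u w : List Bool} {b : Bool} (h : insPair u w b) :
    ∃ x y, u = x ++ y ∧ w = x ++ b :: b :: y :=
  let ⟨i, _, hw⟩ := h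
  ⟨_, _, (List.take_append_drop i u).symm, hw⟩

theorem oneTo010.exists_append {u w : List Bool} (h : oneTo010 u w) :
    ∃ x y, u = x ++ true :: y ∧ w = x ++ false :: true :: false :: y := by
  obtain ⟨i, hi, hone, hw⟩ := h
  refine ⟨_, _, ?_, hw⟩
  rw [List.getD_eq_getElem _ _ hi] at hone
  rw [← hone, List.getElem_cons_drop, List.take_append_drop]

theorem E2.wt_eq {u w : List Bool} (h : E2 u w) :
    insPair u w true ∧ wt w = wt u + 2 ∨ (insPair u w false ∨ oneTo010 u w) ∧ wt w = wt u := by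
  rcases h with h | h | h
  · obtain ⟨x, y, rfl, rfl⟩ := h.exists_append
    exact .inl ⟨h, wt_insert_pair x y true⟩
  · obtain ⟨x, y, rfl, rfl⟩ := h.exists_append
    exact .inr ⟨.inl h, wt_insert_pair x y false⟩
  · obtain ⟨x, y, rfl, rfl⟩ := h.exists_append
    exact .inr ⟨.inr h, wt_replace_one x y⟩

theorem eq_of_modEq_of_add_eq {m a b d e : ℕ} (h : a ≡ b [MOD m]) (hsum : a + d = b + e)
    (hd : d < e + m) (he : e < d + m) : d = e := by
  refine (h.add_left_cancel (by rw [hsum])).eq_of_abs_lt ?_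
  rw [abs_lt]; omega

theorem eq_append_of_cons_cons_eq {b : Bool} {y y' z : List Bool}
    (h : b :: b :: y = z ++ b :: b :: y') (hz : ∀ c ∈ z, c = b) : y = z ++ y' := by
  rw [List.eq_replicate_iff.2 ⟨rfl, hz⟩] at h ⊢
  have hrep : List.replicate z.length b ++ b :: b :: y' =
      b :: b :: (List.replicate z.length b ++ y') := by
    rw [show b :: b :: y' = List.replicate 2 b ++ y' from rfl, ← List.append_assoc,
      List.replicate_append_replicate, Nat.add_comm, ← List.replicate_append_replicate]
    rfl
  simpa [hrep] using h

theorem eq_append_of_insert_true_pair {y y' z : List Bool}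
    (h : true :: true :: y = z ++ true :: true :: y') (hs : wt y = z.length + wt y') :
    y = z ++ y' := by
  have hwt := congrArg wt h
  simp only [wt_cons, wt_append, Bool.toNat_true] at hwt
  have hz : z.count true = z.length := show wt z = z.length by omega
  exact eq_append_of_cons_cons_eq h fun c hc => (List.count_eq_length.1 hz c hc).symm

theorem forall_eq_false_of_wt_eq_zero {z : List Bool} (hz : wt z = 0) : ∀ c ∈ z, c = false :=
  fun c hc => by
    cases c
    · rfl
    · exact absurd hc (List.count_eq_zero.1 hz)

theorem eq_append_of_insert_false_pair {y y' z : List Bool}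
    (h : false :: false :: y = z ++ false :: false :: y') (hs : wt y = wt y') :
    y = z ++ y' := by
  have hwt := congrArg wt h
  simp only [wt_cons, wt_append, Bool.toNat_false] at hwt
  exact eq_append_of_cons_cons_eq h (forall_eq_false_of_wt_eq_zero (by omega))

theorem eq_nil_of_replace_one {y y' z : List Bool}
    (h : false :: true :: false :: y = z ++ false :: true :: false :: y') (hs : wt y = wt y') :
    z = [] := by
  have hwt := congrArg wt h
  simp only [wt_cons, wt_append, Bool.toNat_false, Bool.toNat_true] at hwt
  have hz := forall_eq_false_of_wt_eq_zero (z := z) (by omega)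
  match z, h, hz with
  | [], _, _ => rfl
  | [_], h, _ => simp at h
  | _ :: d :: _, h, hz =>
    simp only [List.cons_append, List.cons.injEq] at h
    simpa [← h.2.1] using hz d

theorem append_eq_of_insert_true_pair {x y x' y' : List Bool}
    (h : x ++ true :: true :: y = x' ++ true :: true :: y')
    (hs : x.length + wt y = x'.length + wt y') : x ++ y = x' ++ y' := by
  rcases List.append_eq_append_iff.1 h with ⟨z, rfl, hz⟩ | ⟨z, rfl, hz⟩
  · rw [List.length_append] at hs
    rw [eq_append_of_insert_true_pair hz (by omega), List.append_assoc]
  · rw [List.length_append] at hs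
    rw [eq_append_of_insert_true_pair hz (by omega), List.append_assoc]

theorem append_eq_of_insert_false_pair {x y x' y' : List Bool}
    (h : x ++ false :: false :: y = x' ++ false :: false :: y') (hs : wt y = wt y') :
    x ++ y = x' ++ y' := by
  rcases List.append_eq_append_iff.1 h with ⟨z, rfl, hz⟩ | ⟨z, rfl, hz⟩
  · rw [eq_append_of_insert_false_pair hz hs, List.append_assoc]
  · rw [eq_append_of_insert_false_pair hz hs.symm, List.append_assoc]

theorem append_eq_of_replace_one {x y x' y' : List Bool}
    (h : x ++ false :: true :: false :: y = x' ++ false :: true :: false :: y')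
    (hs : wt y = wt y') : x ++ true :: y = x' ++ true :: y' := by
  rcases List.append_eq_append_iff.1 h with ⟨z, rfl, hz⟩ | ⟨z, rfl, hz⟩
  · obtain rfl := eq_nil_of_replace_one hz hs
    simpa using hz
  · obtain rfl := eq_nil_of_replace_one hz hs.symm
    simpa using hz.symm

section CodeLevel

variable {m : ℕ} {u v w : List Bool}

theorem eq_of_insPair_true (hu : insPair u w true) (hv : insPair v w true)
    (hum : 2 * u.length < m) (hvm : 2 * v.length < m) (h : vtSum u ≡ vtSum v [MOD m]) :
    u = v := by
  obtain ⟨x, y, rfl, rfl⟩ := hu.exists_append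
  obtain ⟨x', y', rfl, hw⟩ := hv.exists_append
  have hsum : vtSum (x ++ y) + (2 * (x.length + wt y) + 3) =
      vtSum (x' ++ y') + (2 * (x'.length + wt y') + 3) := by
    rw [← vtSum_insert_true_pair, ← vtSum_insert_true_pair, hw]
  have hy := wt_le_length y
  have hy' := wt_le_length y'
  rw [List.length_append] at hum hvm
  have hshift := eq_of_modEq_of_add_eq h hsum (by omega) (by omega)
  exact append_eq_of_insert_true_pair hw (by omega)

theorem eq_of_insPair_false (hu : insPair u w false) (hv : insPair v w false)
    (hum : 2 * u.length < m) (hvm : 2 * v.length < m) (h : vtSum u ≡ vtSum v [MOD m]) :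
    u = v := by
  obtain ⟨x, y, rfl, rfl⟩ := hu.exists_append
  obtain ⟨x', y', rfl, hw⟩ := hv.exists_append
  have hsum : vtSum (x ++ y) + 2 * wt y = vtSum (x' ++ y') + 2 * wt y' := by
    rw [← vtSum_insert_false_pair, ← vtSum_insert_false_pair, hw]
  have hy := wt_le_length y
  have hy' := wt_le_length y'
  rw [List.length_append] at hum hvm
  have hshift := eq_of_modEq_of_add_eq h hsum (by omega) (by omega)
  exact append_eq_of_insert_false_pair hw (by omega)

theorem eq_of_oneTo010 (hu : oneTo010 u w) (hv : oneTo010 v w)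
    (hum : 2 * u.length < m) (hvm : 2 * v.length < m) (h : vtSum u ≡ vtSum v [MOD m]) :
    u = v := by
  obtain ⟨x, y, rfl, rfl⟩ := hu.exists_append
  obtain ⟨x', y', rfl, hw⟩ := hv.exists_append
  have hsum : vtSum (x ++ true :: y) + (2 * wt y + 1) =
      vtSum (x' ++ true :: y') + (2 * wt y' + 1) := by
    rw [← vtSum_replace_one, ← vtSum_replace_one, hw]
  have hy := wt_le_length y
  have hy' := wt_le_length y'
  simp only [List.length_append, List.length_cons] at hum hvm
  have hshift := eq_of_modEq_of_add_eq h hsum (by omega) (by omega)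
  exact append_eq_of_replace_one hw (by omega)

theorem not_insPair_false_and_oneTo010 (hu : insPair u w false) (hv : oneTo010 v w)
    (hum : 2 * u.length < m) (hvm : 2 * v.length < m) (h : vtSum u ≡ vtSum v [MOD m]) :
    False := by
  obtain ⟨x, y, rfl, rfl⟩ := hu.exists_append
  obtain ⟨x', y', rfl, hw⟩ := hv.exists_append
  have hsum : vtSum (x ++ y) + 2 * wt y = vtSum (x' ++ true :: y') + (2 * wt y' + 1) := by
    rw [← vtSum_insert_false_pair, ← vtSum_replace_one, hw]
  have hy := wt_le_length y
  have hy' := wt_le_length y'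
  simp only [List.length_append, List.length_cons] at hum hvm
  have hshift := eq_of_modEq_of_add_eq h hsum (by omega) (by omega)
  omega

end CodeLevel

theorem code_abc_corrects_plus_two_general
    (n a b c : ℕ)
    (u v : List Bool) (hu : u ∈ Cabc n a b c) (hv : v ∈ Cabc n a b c)
    (w : List Bool)
    (hw1 : E2 u w) (hw2 : E2 v w) : u = v := by
  obtain ⟨hun, hua, hub, -⟩ := hu
  obtain ⟨hvn, hva, hvb, -⟩ := hv
  have hvt : vtSum u ≡ vtSum v [MOD 2 * n + 3] := hua.trans hva.symm
  have hum : 2 * u.length < 2 * n + 3 := by omega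
  have hvm : 2 * v.length < 2 * n + 3 := by omega
  rcases hw1.wt_eq with ⟨hu2, hwu⟩ | ⟨hu0, hwu⟩ <;>
    rcases hw2.wt_eq with ⟨hv2, hwv⟩ | ⟨hv0, hwv⟩
  · exact eq_of_insPair_true hu2 hv2 hum hvm hvt
  · omega
  · omega
  rcases hu0 with hu0 | hu0 <;> rcases hv0 with hv0 | hv0
  · exact eq_of_insPair_false hu0 hv0 hum hvm hvt
  · exact (not_insPair_false_and_oneTo010 hu0 hv0 hum hvm hvt).elim
  · exact (not_insPair_false_and_oneTo010 hv0 hu0 hvm hum hvt.symm).elim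
  · exact eq_of_oneTo010 hu0 hv0 hum hvm hvt

/-- `C_{(a,b,c)}` corrects a single occurrence of an operation
from `E₂`. -/
theorem code_abc_corrects_plus_two
    (n a b c : ℕ) (hn : 1 ≤ n) (ha : a ≤ 2 * (n + 1)) (hb : b ≤ 4) (hc : c ≤ 2 * n)
    (u v : List Bool) (hu : u ∈ Cabc n a b c) (hv : v ∈ Cabc n a b c)
    (w : List Bool) (hwlen : w.length = n + 2)
    (hw1 : E2 u w) (hw2 : E2 v w) : u = v :=
  code_abc_corrects_plus_two_general n a b c u v hu hv w hw1 hw2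

end BinCode
end

section
/- Let q ≥ 2, k ≥ 1, let x' ∈ Σ_q^{n'} with n' > k, let a ∈ Σ_q, and let j be a position with k < j ≤ n'. Define x'' = x' + a·e_j (addition modulo q in position j). Then φ̂(x'') = φ̂(x'); moreover, if k < j ≤ n' − k then φ̄(x'') = φ̄(x') + a·e_{j−k} − a·e_j (as vectors in Σ_q^{n'−k}), and if n' − k < j ≤ n' then φ̄(x'') = φ̄(x') + a·e_{j−k}. In particular, such a substitution alters at most two entries of φ̄(x'), at distance exactly k. -/
open List

namespace NoisyDup

variable {q : ℕ}

/-- Tandem duplication `T_{i,k}`: duplicates the length-`k` substring starting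
after position `i` (0-based index `i`), if it exists. -/
def dup (i k : ℕ) (x : List (ZMod q)) : List (ZMod q) :=
  if i + k ≤ x.length then x.take i ++ (x.drop i).take k ++ x.drop i else x

/-- Add `a` (mod `q`) to the entry at 0-based index `i`. -/
def addAt (x : List (ZMod q)) (i : ℕ) (a : ZMod q) : List (ZMod q) :=
  x.set i (x.getD i 0 + a)

/-- One exact tandem duplication of length `k`. -/
def ExactStep (k : ℕ) (x y : List (ZMod q)) : Prop :=
  ∃ i, i + k ≤ x.length ∧ y = dup i k x

/-- One noisy duplication of length `k`: an exact duplication followed by adding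
some `a ≠ 0` to one symbol of the inserted copy (positions are 1-indexed). -/
def NoisyStep (k : ℕ) (x y : List (ZMod q)) : Prop :=
  ∃ (i : ℕ) (a : ZMod q) (j : ℕ), i + k ≤ x.length ∧ a ≠ 0 ∧
    i + k + 1 ≤ j ∧ j ≤ i + 2 * k ∧ y = addAt (dup i k x) (j - 1) a

/-- Descendants by exact duplications only: `D_k^{*(0)}`. -/
def ExactDesc (k : ℕ) (x y : List (ZMod q)) : Prop :=
  Relation.ReflTransGen (ExactStep k) x y

/-- The descendant cone `D_k^{*(≤1)}`: any number of exact duplications and at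
most one noisy duplication. -/
def descCone (k : ℕ) (x : List (ZMod q)) : Set (List (ZMod q)) :=
  {y | ExactDesc k x y ∨ ∃ u v, ExactDesc k x u ∧ NoisyStep k u v ∧ ExactDesc k v y}

/-- `φ̂(x)`: the first `k` symbols. -/
def hatPhi (k : ℕ) (x : List (ZMod q)) : List (ZMod q) := x.take k

/-- `φ̄(x)_i = x_{i+k} - x_i` (1-indexed), a string of length `|x| - k`. -/
def barPhi (k : ℕ) (x : List (ZMod q)) : List (ZMod q) :=
  (List.range (x.length - k)).map fun i => x.getD (i + k) 0 - x.getD i 0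

/-- Auxiliary for `mu`: `cnt` counts the current run of zeros. -/
def muAux (k : ℕ) : ℕ → List (ZMod q) → List (ZMod q)
  | cnt, [] => List.replicate (cnt % k) 0
  | cnt, a :: t =>
      if a = 0 then muAux k (cnt + 1) t
      else List.replicate (cnt % k) 0 ++ a :: muAux k 0 t

/-- `μ(z)`: reduce the length of every maximal run of zeros modulo `k`. -/
def mu (k : ℕ) (z : List (ZMod q)) : List (ZMod q) := muAux k 0 z

/-- `x` contains a tandem repeat of length `k`. -/
def HasRepeat (k : ℕ) (x : List (ZMod q)) : Prop :=
  ∃ i, i + 2 * k ≤ x.length ∧ (x.drop i).take k = (x.drop (i + k)).take k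

/-- `x` is irreducible: it contains no tandem repeat of length `k`. -/
def IsIrreducible (k : ℕ) (x : List (ZMod q)) : Prop := ¬ HasRepeat k x

/-- The duplication root: the (unique) irreducible ancestor of `x` under exact
duplications of length `k`. -/
noncomputable def rt (k : ℕ) (x : List (ZMod q)) : List (ZMod q) :=
  haveI := Classical.propDecidable (∃ z, IsIrreducible k z ∧ ExactDesc k z x)
  if h : ∃ z, IsIrreducible k z ∧ ExactDesc k z x then h.choose else x

/-- The set of irreducible strings of length `n` over `Σ_q`. -/
def Irr (k n : ℕ) : Set (List (ZMod q)) := {x | x.length = n ∧ IsIrreducible k x}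

/-- `ins_k(u, j)`: the subsequence of entries in (1-indexed) positions congruent
to `j` modulo `k`. -/
def splitk (k j : ℕ) (u : List (ZMod q)) : List (ZMod q) :=
  ((u.zipIdx.map Prod.swap).filter fun p => p.1 % k == j - 1).map Prod.snd

/-- The interleaving `inl(u) = ins_k(u,1) ⋯ ins_k(u,k)`. -/
def inl (k : ℕ) (u : List (ZMod q)) : List (ZMod q) :=
  ((List.range k).map fun j => splitk k (j + 1) u).flatten

/-- The indicator `Γ(z)` of the nonzero entries of `z`. -/
def gamma (z : List (ZMod q)) : List Bool := z.map fun a => decide (a ≠ 0)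

/-- The cumulative-sum map (mod `q`). -/
def cusum (z : List (ZMod q)) : List (ZMod q) :=
  (List.range z.length).map fun i => (z.take (i + 1)).sum

/-- Hamming weight of a binary string. -/
def wt (u : List Bool) : ℕ := u.count true

/-- The VT syndrome `Σ i·u_i` (1-indexed). -/
def vtSum (u : List Bool) : ℕ := ((u.zipIdx.map Prod.swap).map fun p => if p.2 then p.1 + 1 else 0).sum

/-- The (variable-length) Varshamov–Tenengolts code. -/
def CVT (α m : ℕ) : Set (List Bool) := {z | z.length ≤ m - 1 ∧ vtSum z % m = α}

/-- `Σ_{i=1}^{|u|} i · (u_1 + ⋯ + u_i)`. -/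
def wSum (u : List Bool) : ℕ :=
  ((List.range u.length).map fun i => (i + 1) * wt (u.take (i + 1))).sum

/-- Tenengolts' binary map `ζ`. -/
def zeta (z : List (ZMod q)) : List Bool :=
  (z.zipIdx.map Prod.swap).map fun p => if p.1 = 0 then true else decide ((z.getD (p.1 - 1) 0).val ≤ p.2.val)

/-- `Σ_{i=1}^{|z|} (i-1)·ζ(z)_i`. -/
def tqSum (z : List (ZMod q)) : ℕ := (((zeta z).zipIdx.map Prod.swap).map fun p => if p.2 then p.1 else 0).sum

/-- Tenengolts' (variable-length) `q`-ary single-indel-correcting code. -/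
def CTq (α β m : ℕ) : Set (List (ZMod q)) :=
  {z | z.length ≤ m ∧ (z.map ZMod.val).sum % q = α ∧ tqSum z % m = β}

/-- The length of `s_j = Γ(ins_k(μ,j))` for a codeword of length `n`
(the number of positions in `{1,…,n-k}` congruent to `j` mod `k`). -/
def sLen (k n j : ℕ) : ℕ := (List.range (n - k)).countP fun i => i % k == j - 1

/-- Admissibility of the parameters of the code `C_nd`. -/
def Admissible (q k n : ℕ) (a c : ℕ → ℕ) (b a1 a2 a3 a4 b1 b2 b3 b4 : ℕ) : Prop :=
  (∀ j ∈ Finset.Icc 1 k, a j ≤ 2 * (sLen k n j + 1)) ∧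
  (∀ j ∈ Finset.Icc 1 k, c j ≤ 2 * sLen k n j) ∧
  b ≤ 4 ∧ a1 ≤ q - 1 ∧ a2 ≤ q - 1 ∧ a3 ≤ q - 1 ∧ a4 ≤ q - 1 ∧
  b1 ≤ (n - k) / 2 ∧ b2 ≤ (n - k) / 2 ∧ b3 ≤ n - k - 1 ∧ b4 ≤ n - k - 1

/-- The code `C_nd` for the noisy duplication channel. -/
def Cnd (k n : ℕ) (a c : ℕ → ℕ) (b a1 a2 a3 a4 b1 b2 b3 b4 : ℕ) : Set (List (ZMod q)) :=
  {x | x.length = n ∧ IsIrreducible k x ∧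
    (∀ j ∈ Finset.Icc 1 k,
        gamma (splitk k j (mu k (barPhi k x))) ∈
          CVT (a j) (2 * (gamma (splitk k j (mu k (barPhi k x)))).length + 3)) ∧
    (∀ j ∈ Finset.Icc 1 k,
        wSum (gamma (splitk k j (mu k (barPhi k x)))) %
          (2 * (gamma (splitk k j (mu k (barPhi k x)))).length + 1) = c j) ∧
    ((Finset.Icc 1 k).sum fun j => wt (gamma (splitk k j (mu k (barPhi k x))))) % 5 = b ∧
    splitk 2 1 (inl k (mu k (barPhi k x))) ∈ CTq a1 b1 ((n - k + 1) / 2) ∧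
    splitk 2 2 (inl k (mu k (barPhi k x))) ∈ CTq a2 b2 ((n - k + 1) / 2) ∧
    cusum (inl k (mu k (barPhi k x))) ∈ CTq a3 b3 (n - k) ∧
    inl k (mu k (barPhi k x)) ∈ CTq a4 b4 (n - k)}

/-- `w` is obtained from `u` by deleting one occurrence of the symbol `b`. -/
def delSymb (u w : List (ZMod q)) (b : ZMod q) : Prop :=
  ∃ i, i < u.length ∧ u.getD i 0 = b ∧ w = u.eraseIdx i

/-- `w` is obtained from `u` by inserting the symbol `b` at some position. -/
def insOne (u w : List (ZMod q)) (b : ZMod q) : Prop :=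
  ∃ i, i ≤ u.length ∧ w = u.take i ++ b :: u.drop i

/-- `w` is obtained from `u` by inserting the adjacent pair `b, c`. -/
def insPair (u w : List (ZMod q)) (b c : ZMod q) : Prop :=
  ∃ i, i ≤ u.length ∧ w = u.take i ++ b :: c :: u.drop i

/-- `w` is obtained from `u` by inserting two `0`s separated by exactly one
(unchanged) symbol of `u`. -/
def insSpread0 (u w : List (ZMod q)) : Prop :=
  ∃ i, i < u.length ∧ w = u.take i ++ 0 :: u.getD i 0 :: 0 :: u.drop (i + 1)

/-- `w` is obtained from `u` by inserting a nonzero `a` and replacing the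
symbol `c` immediately following the insertion point by `c - a`. -/
def insSub (u w : List (ZMod q)) : Prop :=
  ∃ a : ZMod q, a ≠ 0 ∧ ∃ i, i < u.length ∧
    w = u.take i ++ a :: (u.getD i 0 - a) :: u.drop (i + 1)

/-- `w` is obtained from `u` by replacing a single symbol `0` by a nonzero symbol. -/
def subOne (u w : List (ZMod q)) : Prop :=
  ∃ i, i < u.length ∧ u.getD i 0 = 0 ∧ ∃ a : ZMod q, a ≠ 0 ∧ w = u.set i a

/-- `w` is obtained from `u` by replacing two adjacent symbols `0, c` by
`a, c - a` for some nonzero `a`. -/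
def subTwo (u w : List (ZMod q)) : Prop :=
  ∃ i, i + 1 < u.length ∧ u.getD i 0 = 0 ∧ ∃ a : ZMod q, a ≠ 0 ∧
    w = u.take i ++ a :: (u.getD (i + 1) 0 - a) :: u.drop (i + 2)

/-- `w` is obtained from `u` by swapping an adjacent pair `b, 0` (with `b ≠ 0`)
into `0, b`. -/
def swapPair (u w : List (ZMod q)) : Prop :=
  ∃ i, i + 1 < u.length ∧ u.getD i 0 ≠ 0 ∧ u.getD (i + 1) 0 = 0 ∧
    w = u.take i ++ 0 :: u.getD i 0 :: u.drop (i + 2)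

/-- `w` is obtained from `u` by deleting a single symbol. -/
def delQ (u w : List (ZMod q)) : Prop := ∃ i, i < u.length ∧ w = u.eraseIdx i

/-- `w` is obtained from `u` by inserting a single symbol. -/
def insQ (u w : List (ZMod q)) : Prop :=
  ∃ (i : ℕ) (b : ZMod q), i ≤ u.length ∧ w = u.take i ++ b :: u.drop i

lemma length_addAt (x : List (ZMod q)) (i : ℕ) (a : ZMod q) :
    (addAt x i a).length = x.length :=
  List.length_set ..

lemma addAt_of_length_le {x : List (ZMod q)} {i : ℕ} (h : x.length ≤ i) (a : ZMod q) :
    addAt x i a = x :=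
  List.set_eq_of_length_le h

lemma getD_addAt {x : List (ZMod q)} {t : ℕ} (ht : t < x.length) (i : ℕ) (a : ZMod q) :
    (addAt x i a).getD t 0 = x.getD t 0 + if t = i then a else 0 := by
  rw [addAt, List.getD_eq_getElem _ _ (by simpa using ht), List.getElem_set,
    List.getD_eq_getElem _ _ ht]
  rcases eq_or_ne t i with rfl | h
  · simp [List.getElem?_eq_getElem ht]
  · simp [h, h.symm]

lemma hatPhi_addAt_of_le {k i : ℕ} (h : k ≤ i) (x : List (ZMod q)) (a : ZMod q) :
    hatPhi k (addAt x i a) = hatPhi k x :=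
  List.take_set_of_le h

lemma length_barPhi (k : ℕ) (x : List (ZMod q)) :
    (barPhi k x).length = x.length - k := by
  simp [barPhi]

lemma getD_barPhi {k t : ℕ} {x : List (ZMod q)} (ht : t < x.length - k) :
    (barPhi k x).getD t 0 = x.getD (t + k) 0 - x.getD t 0 := by
  simp [barPhi, List.getD_eq_getElem?_getD, ht]

/-- `addAt` at an index past the end is the identity, so for `|x| - k ≤ i + k` the right-hand
side is a single change of `φ̄`, and for `|x| ≤ i + k` both sides are unchanged. -/
theorem barPhi_addAt (k i : ℕ) (x : List (ZMod q)) (a : ZMod q) :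
    barPhi k (addAt x (i + k) a) = addAt (addAt (barPhi k x) i a) (i + k) (-a) := by
  apply List.ext_getElem (by simp only [length_barPhi, length_addAt])
  intro t h _
  have ht : t < x.length - k := by simpa only [length_barPhi, length_addAt] using h
  have ht' : t < (barPhi k x).length := by rwa [length_barPhi]
  rw [← List.getD_eq_getElem _ 0, ← List.getD_eq_getElem _ 0,
    getD_barPhi (by rwa [length_addAt]), getD_addAt (by omega) (i + k) a,
    getD_addAt (by omega) (i + k) a, getD_addAt (by rwa [length_addAt]) (i + k) (-a),
    getD_addAt ht' i a, getD_barPhi ht]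
  split_ifs <;> first | omega | ring

theorem substitution_in_transform_domain_general
    (q k : ℕ) (n' : ℕ)
    (x' : List (ZMod q)) (hx : x'.length = n')
    (a : ZMod q) (j : ℕ) (hj1 : k < j) :
    hatPhi k (addAt x' (j - 1) a) = hatPhi k x' ∧
    (j ≤ n' - k →
      barPhi k (addAt x' (j - 1) a) =
        addAt (addAt (barPhi k x') (j - k - 1) a) (j - 1) (-a)) ∧
    (n' - k < j →
      barPhi k (addAt x' (j - 1) a) = addAt (barPhi k x') (j - k - 1) a) := by
  obtain ⟨p, rfl⟩ : ∃ p, j = p + k + 1 := ⟨j - k - 1, by omega⟩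
  rw [show p + k + 1 - 1 = p + k by omega, show p + k + 1 - k - 1 = p by omega]
  refine ⟨hatPhi_addAt_of_le (Nat.le_add_left k p) x' a, fun _ => barPhi_addAt k p x' a,
    fun hj => ?_⟩
  rw [barPhi_addAt, addAt_of_length_le (by rw [length_addAt, length_barPhi]; omega)]

/-- adding `a` at position `j > k` leaves `φ̂` unchanged and
changes `φ̄` by `+a` at position `j - k` and (if `j ≤ n' - k`) by `-a` at
position `j`. -/
theorem substitution_in_transform_domain
    (q k : ℕ) (hq : 2 ≤ q) (hk : 1 ≤ k) (n' : ℕ) (hn : k < n')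
    (x' : List (ZMod q)) (hx : x'.length = n')
    (a : ZMod q) (j : ℕ) (hj1 : k < j) (hj2 : j ≤ n') :
    hatPhi k (addAt x' (j - 1) a) = hatPhi k x' ∧
    (j ≤ n' - k →
      barPhi k (addAt x' (j - 1) a) =
        addAt (addAt (barPhi k x') (j - k - 1) a) (j - 1) (-a)) ∧
    (n' - k < j →
      barPhi k (addAt x' (j - 1) a) = addAt (barPhi k x') (j - k - 1) a) :=
  substitution_in_transform_domain_general q k n' x' hx a j hj1

end NoisyDup
end
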